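/- Suppose 𝓜 is an MS-measurable structure, S₁,…,S_n are infinite parameter-definable sets, S = S₁ × … × S_n, I ⊆ V = {1,…,n}, S_I is the product of the S_i for i ∈ I, and π_I : S → S_I is the projection. Then the push-forward of ν^S under π_I agrees with ν^{S_I} on definable sets: for every definable D ⊆ S_I, ν^S(π_I⁻¹(D)) = ν^{S_I}(D). -/

import Mathlib

open FirstOrder Set

namespace MeasureAmalgamation

/-- An MS-measuring function (Macpherson–Steinhorn measurability, Definition 4.1):
a dimension-measure function `h = (dim, μ)` on the parameter-definable subsets of the
finite powers of `M` satisfying: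
(i) nonempty finite sets get `h(X) = (0, |X|)`;
(ii) each formula `φ(x̄, ȳ)` yields only finitely many values `h(φ(x̄, ā))`, each on an
`∅`-definable set of parameters `ā`;
(iii) the Fubini property for definable surjections.
The measure is normalised so that `μ(M) = 1`, and extended by `μ(∅) = 0`;
`μ` takes positive values on nonempty definable sets. -/
structure MSMeasuring (L : FirstOrder.Language) (M : Type*) [L.Structure M] where
  /-- the dimension of a definable set -/
  dim : ∀ {α : Type} [Fintype α], Set (α → M) → ℕ
  /-- the measure of a definable set -/
  mu : ∀ {α : Type} [Fintype α], Set (α → M) → ℝ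
  /-- `h` takes values in `ℕ × ℝ^{>0}` on nonempty definable sets -/
  mu_pos : ∀ {α : Type} [Fintype α] (X : Set (α → M)),
    (Set.univ : Set M).Definable L X → X.Nonempty → 0 < mu X
  /-- `μ(∅) = 0` -/
  mu_empty : ∀ {α : Type} [Fintype α], mu (∅ : Set (α → M)) = 0
  /-- normalisation: `μ(M) = 1` -/
  mu_norm : mu (Set.univ : Set (Fin 1 → M)) = 1
  /-- (i): nonempty finite sets `X` have `h(X) = (0, |X|)` -/
  finite_case : ∀ {α : Type} [Fintype α] (X : Set (α → M)),
    (Set.univ : Set M).Definable L X → X.Nonempty → X.Finite →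
      dim X = 0 ∧ mu X = X.ncard
  /-- (ii), finiteness of the set of values `h(φ(x̄, ā))` -/
  finite_values : ∀ {α β : Type} [Fintype α] [Fintype β] (φ : L.Formula (α ⊕ β)),
    {v : ℕ × ℝ | ∃ b : β → M,
      {x : α → M | φ.Realize (Sum.elim x b)}.Nonempty ∧
      v = (dim {x : α → M | φ.Realize (Sum.elim x b)},
           mu {x : α → M | φ.Realize (Sum.elim x b)})}.Finite
  /-- (ii), `∅`-definability of the set of parameters giving a fixed value -/
  definable_values : ∀ {α β : Type} [Fintype α] [Fintype β]
    (φ : L.Formula (α ⊕ β)) (v : ℕ × ℝ),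
    (∅ : Set M).Definable L
      {b : β → M | {x : α → M | φ.Realize (Sum.elim x b)}.Nonempty ∧
        (dim {x : α → M | φ.Realize (Sum.elim x b)},
         mu {x : α → M | φ.Realize (Sum.elim x b)}) = v}
  /-- (iii): the Fubini property for definable surjections -/
  fubini : ∀ {α β : Type} [Fintype α] [Fintype β]
    (X : Set (α → M)) (Y : Set (β → M)) (f : (α → M) → (β → M)),
    X.Nonempty →
    (Set.univ : Set M).Definable L X →
    (Set.univ : Set M).Definable L Y →
    (Set.univ : Set M).Definable L
      {p : α ⊕ β → M | (p ∘ Sum.inl) ∈ X ∧ f (p ∘ Sum.inl) = p ∘ Sum.inr} →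
    f '' X = Y →
    ∀ (r : ℕ) (Ys : Fin r → Set (β → M)) (d e : Fin r → ℕ) (mf nf : Fin r → ℝ),
      (∀ i, (Ys i).Nonempty) →
      (∀ i, (Set.univ : Set M).Definable L (Ys i)) →
      (∀ i j, i ≠ j → Disjoint (Ys i) (Ys j)) →
      (⋃ i, Ys i) = Y →
      (∀ i, ∀ y ∈ Ys i, dim (f ⁻¹' {y} ∩ X) = d i ∧ mu (f ⁻¹' {y} ∩ X) = mf i) →
      (∀ i, dim (Ys i) = e i ∧ mu (Ys i) = nf i) →
      ∀ c : ℕ, (∀ i, d i + e i ≤ c) → (∃ i, d i + e i = c) →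
        dim X = c ∧
        mu X = ∑ i ∈ Finset.univ.filter (fun i => d i + e i = c), mf i * nf i

/-- The normalised measure `ν^S` on definable subsets of an infinite definable set `S`:
`ν^S(D) = μ(D)/μ(S)` if `dim D = dim S`, and `ν^S(D) = 0` otherwise. -/
noncomputable def MSMeasuring.nu {L : FirstOrder.Language} {M : Type*} [L.Structure M]
    (h : MSMeasuring L M) {α : Type} [Fintype α] (S D : Set (α → M)) : ℝ :=
  if h.dim D = h.dim S then h.mu D / h.mu S else 0

/-- A subset of `M` viewed as a subset of the power `M^{Fin 1}`. -/
def toDef1 (M : Type*) (s : Set M) : Set (Fin 1 → M) := {x | x 0 ∈ s}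

/-- The product `S = S₁ × … × S_n` inside `M^n`. -/
def prodSet {M : Type*} {n : ℕ} (Si : Fin n → Set M) : Set (Fin n → M) :=
  {x | ∀ i, x i ∈ Si i}

/-- The product `S_I` of the `S_i` for `i ∈ I`. -/
def prodSetOn {M : Type*} {n : ℕ} (Si : Fin n → Set M) (I : Finset (Fin n)) :
    Set (↥I → M) := {x | ∀ i : ↥I, x i ∈ Si i.val}

/-- The projection `π_I : M^n → M^I`. -/
def projI {M : Type*} {n : ℕ} (I : Finset (Fin n)) (x : Fin n → M) : ↥I → M :=
  fun i => x ↑i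

/-- Algebraic closure: `b ∈ acl(Z)` iff `b` belongs to some finite `Z`-definable set. -/
def inAcl (L : FirstOrder.Language) {M : Type*} [L.Structure M] (Z : Set M) (b : M) :
    Prop :=
  ∃ s : Set M, b ∈ s ∧ s.Finite ∧ Z.Definable L (toDef1 M s)

/-! Over each point `y` of `D ⊆ S_I`, the fibre of `π_I⁻¹(D) ∩ S` is mapped bijectively onto
`S_{V∖I}` by the definable projection `π_{V∖I}`, so Fubini gives
`h(π_I⁻¹(D) ∩ S) = (dim S_{V∖I} + dim D, μ(S_{V∖I}) · μ(D))`. The case `D = S_I` computes `h(S)`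
itself, and the positive factor `μ(S_{V∖I})` cancels in `ν^S`. -/

section Definability

variable {L : FirstOrder.Language} {M : Type*} [L.Structure M] {α : Type}

lemma definable_coord_eq_const (i : α) (m : M) :
    (Set.univ : Set M).Definable L {x : α → M | x i = m} :=
  ⟨(Language.Term.var i).equal (L.con (⟨m, Set.mem_univ m⟩ : (Set.univ : Set M))).term, by
    ext x; simp [Language.Formula.realize_equal]⟩

lemma definable_coord_eq_coord (i j : α) :
    (Set.univ : Set M).Definable L {x : α → M | x i = x j} :=
  ⟨(Language.Term.var i).equal (Language.Term.var j), by
    ext x; simp [Language.Formula.realize_equal]⟩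

lemma definable_singleton [Fintype α] (a : α → M) :
    (Set.univ : Set M).Definable L ({a} : Set (α → M)) := by
  have hsingleton : ({a} : Set (α → M)) = ⋂ i, {x : α → M | x i = a i} := by
    ext x; simp [funext_iff]
  rw [hsingleton]
  exact definable_iInter_of_finite fun i => definable_coord_eq_const i (a i)

lemma definable_setOf_forall_mem [Fintype α] {s : α → Set M}
    (hs : ∀ i, (Set.univ : Set M).Definable L (toDef1 M (s i))) :
    (Set.univ : Set M).Definable L {x : α → M | ∀ i, x i ∈ s i} := by
  rw [Set.ofPred_forall]
  exact definable_iInter_of_finite fun i => (hs i).preimage_comp fun _ : Fin 1 => i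

variable {n : ℕ}

lemma definable_prodSet {Si : Fin n → Set M}
    (hdef : ∀ i, (Set.univ : Set M).Definable L (toDef1 M (Si i))) :
    (Set.univ : Set M).Definable L (prodSet Si) :=
  definable_setOf_forall_mem hdef

lemma definable_prodSetOn {Si : Fin n → Set M}
    (hdef : ∀ i, (Set.univ : Set M).Definable L (toDef1 M (Si i))) (I : Finset (Fin n)) :
    (Set.univ : Set M).Definable L (prodSetOn Si I) :=
  definable_setOf_forall_mem fun i => hdef i

lemma definable_projI_preimage (I : Finset (Fin n)) {D : Set (↥I → M)}
    (hD : (Set.univ : Set M).Definable L D) :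
    (Set.univ : Set M).Definable L (projI I ⁻¹' D) :=
  hD.preimage_comp Subtype.val

lemma definable_graph_projI (I : Finset (Fin n)) {X : Set (Fin n → M)}
    (hX : (Set.univ : Set M).Definable L X) :
    (Set.univ : Set M).Definable L
      {p : Fin n ⊕ ↥I → M | p ∘ Sum.inl ∈ X ∧ projI I (p ∘ Sum.inl) = p ∘ Sum.inr} := by
  have hgraph : {p : Fin n ⊕ ↥I → M | p ∘ Sum.inl ∈ X ∧ projI I (p ∘ Sum.inl) = p ∘ Sum.inr} =
      (fun p : Fin n ⊕ ↥I → M => p ∘ Sum.inl) ⁻¹' X ∩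
        ⋂ i : ↥I, {p | p (Sum.inl i.val) = p (Sum.inr i)} := by
    ext p; simp [funext_iff, projI]
  rw [hgraph]
  exact (hX.preimage_comp Sum.inl).inter
    (definable_iInter_of_finite fun i => definable_coord_eq_coord _ _)

end Definability

namespace MSMeasuring

variable {L : FirstOrder.Language} {M : Type*} [L.Structure M] (h : MSMeasuring L M)
  {α β : Type} [Fintype α] [Fintype β]

lemma dim_mu_of_const_fiber {X : Set (α → M)} {Y : Set (β → M)} {f : (α → M) → (β → M)}
    (hXne : X.Nonempty) (hXdef : (Set.univ : Set M).Definable L X)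
    (hYdef : (Set.univ : Set M).Definable L Y)
    (hGdef : (Set.univ : Set M).Definable L
      {p : α ⊕ β → M | p ∘ Sum.inl ∈ X ∧ f (p ∘ Sum.inl) = p ∘ Sum.inr})
    (hfX : f '' X = Y) (d : ℕ) (m : ℝ)
    (hfib : ∀ y ∈ Y, h.dim (f ⁻¹' {y} ∩ X) = d ∧ h.mu (f ⁻¹' {y} ∩ X) = m) :
    h.dim X = d + h.dim Y ∧ h.mu X = m * h.mu Y := by
  have hYne : Y.Nonempty := hfX ▸ hXne.image f
  have hfubini := h.fubini X Y f hXne hXdef hYdef hGdef hfX 1 (fun _ => Y) (fun _ => d)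
    (fun _ => h.dim Y) (fun _ => m) (fun _ => h.mu Y) (fun _ => hYne) (fun _ => hYdef)
    (fun i j hij => absurd (Subsingleton.elim i j) hij)
    (Set.iUnion_const Y) (fun _ => hfib) (fun _ => ⟨rfl, rfl⟩) (d + h.dim Y)
    (fun _ => le_rfl) ⟨0, rfl⟩
  exact ⟨hfubini.1, by simpa using hfubini.2⟩

lemma dim_mu_eq_of_injOn {X : Set (α → M)} {Y : Set (β → M)} {f : (α → M) → (β → M)}
    (hXne : X.Nonempty) (hXdef : (Set.univ : Set M).Definable L X)
    (hYdef : (Set.univ : Set M).Definable L Y)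
    (hGdef : (Set.univ : Set M).Definable L
      {p : α ⊕ β → M | p ∘ Sum.inl ∈ X ∧ f (p ∘ Sum.inl) = p ∘ Sum.inr})
    (hfX : f '' X = Y) (hinj : Set.InjOn f X) :
    h.dim X = h.dim Y ∧ h.mu X = h.mu Y := by
  have hsingleton_fibers : ∀ y ∈ Y, h.dim (f ⁻¹' {y} ∩ X) = 0 ∧ h.mu (f ⁻¹' {y} ∩ X) = 1 := by
    intro y hy
    obtain ⟨x, hxX, rfl⟩ := hfX ▸ hy
    have hfiber : f ⁻¹' {f x} ∩ X = {x} :=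
      Set.eq_singleton_iff_unique_mem.2 ⟨⟨rfl, hxX⟩, fun z hz => hinj hz.2 hxX hz.1⟩
    rw [hfiber]
    simpa using h.finite_case {x} (definable_singleton x) (Set.singleton_nonempty x)
      (Set.finite_singleton x)
  simpa using h.dim_mu_of_const_fiber hXne hXdef hYdef hGdef hfX 0 1 hsingleton_fibers

end MSMeasuring

section Product

variable {M : Type*} {n : ℕ} {Si : Fin n → Set M} {I : Finset (Fin n)}

def glue (I : Finset (Fin n)) (y : ↥I → M) (z : ↥Iᶜ → M) : Fin n → M :=
  fun i => if hi : i ∈ I then y ⟨i, hi⟩ else z ⟨i, Finset.mem_compl.2 hi⟩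

lemma projI_glue (y : ↥I → M) (z : ↥Iᶜ → M) : projI I (glue I y z) = y := by
  funext i; simp [projI, glue]

lemma projI_compl_glue (y : ↥I → M) (z : ↥Iᶜ → M) : projI Iᶜ (glue I y z) = z := by
  funext i; simp [projI, glue, Finset.mem_compl.1 i.2]

lemma glue_mem_prodSet {y : ↥I → M} {z : ↥Iᶜ → M} (hy : y ∈ prodSetOn Si I)
    (hz : z ∈ prodSetOn Si Iᶜ) : glue I y z ∈ prodSet Si := by
  intro i
  by_cases hi : i ∈ I
  · simpa [glue, hi] using hy ⟨i, hi⟩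
  · simpa [glue, hi] using hz ⟨i, Finset.mem_compl.2 hi⟩

lemma prodSetOn_nonempty (hne : ∀ i, (Si i).Nonempty) (J : Finset (Fin n)) :
    (prodSetOn Si J).Nonempty :=
  ⟨fun i => (hne i).some, fun i => (hne i).some_mem⟩

lemma projI_mem_prodSetOn {x : Fin n → M} (hx : x ∈ prodSet Si) (J : Finset (Fin n)) :
    projI J x ∈ prodSetOn Si J :=
  fun i => hx i

lemma eq_of_projI_eq_of_projI_compl_eq {a b : Fin n → M} (hI : projI I a = projI I b)
    (hIc : projI Iᶜ a = projI Iᶜ b) : a = b := by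
  funext i
  by_cases hi : i ∈ I
  · exact congrFun hI ⟨i, hi⟩
  · exact congrFun hIc ⟨i, Finset.mem_compl.2 hi⟩

lemma image_projI_preimage_inter_prodSet (hW : (prodSetOn Si Iᶜ).Nonempty) {D : Set (↥I → M)}
    (hD : D ⊆ prodSetOn Si I) : projI I '' (projI I ⁻¹' D ∩ prodSet Si) = D := by
  refine subset_antisymm (Set.image_subset_iff.2 Set.inter_subset_left) fun y hy => ?_
  obtain ⟨z, hz⟩ := hW
  exact ⟨glue I y z, ⟨by simpa [projI_glue] using hy, glue_mem_prodSet (hD hy) hz⟩,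
    projI_glue y z⟩

lemma image_projI_compl_fiber {y : ↥I → M} (hy : y ∈ prodSetOn Si I) :
    projI Iᶜ '' (projI I ⁻¹' {y} ∩ prodSet Si) = prodSetOn Si Iᶜ := by
  refine subset_antisymm ?_ fun z hz => ?_
  · rintro _ ⟨x, ⟨-, hx⟩, rfl⟩
    exact projI_mem_prodSetOn hx Iᶜ
  · exact ⟨glue I y z, ⟨projI_glue y z, glue_mem_prodSet hy hz⟩, projI_compl_glue y z⟩

lemma injOn_projI_compl_fiber (y : ↥I → M) : Set.InjOn (projI Iᶜ) (projI I ⁻¹' {y}) :=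
  fun _ ha _ hb hab => eq_of_projI_eq_of_projI_compl_eq (ha.trans hb.symm) hab

end Product

section Fubini

variable {L : FirstOrder.Language} {M : Type*} [L.Structure M] {n : ℕ} {Si : Fin n → Set M}

lemma MSMeasuring.dim_mu_preimage_projI (h : MSMeasuring L M) (hne : ∀ i, (Si i).Nonempty)
    (hdef : ∀ i, (Set.univ : Set M).Definable L (toDef1 M (Si i))) {I : Finset (Fin n)}
    {D : Set (↥I → M)} (hDdef : (Set.univ : Set M).Definable L D) (hDne : D.Nonempty)
    (hDsub : D ⊆ prodSetOn Si I) :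
    h.dim (projI I ⁻¹' D ∩ prodSet Si) = h.dim (prodSetOn Si Iᶜ) + h.dim D ∧
      h.mu (projI I ⁻¹' D ∩ prodSet Si) = h.mu (prodSetOn Si Iᶜ) * h.mu D := by
  have hW := prodSetOn_nonempty hne Iᶜ
  have hXdef := (definable_projI_preimage I hDdef).inter (definable_prodSet hdef)
  have himage := image_projI_preimage_inter_prodSet hW hDsub
  refine h.dim_mu_of_const_fiber (Set.image_nonempty.1 (himage ▸ hDne)) hXdef hDdef
    (definable_graph_projI I hXdef) himage _ _ fun y hy => ?_
  have hfiber :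
      projI I ⁻¹' {y} ∩ (projI I ⁻¹' D ∩ prodSet Si) = projI I ⁻¹' {y} ∩ prodSet Si := by
    ext x
    simp only [Set.mem_inter_iff, Set.mem_preimage, Set.mem_singleton_iff]
    exact ⟨fun hx => ⟨hx.1, hx.2.2⟩, fun hx => ⟨hx.1, hx.1 ▸ hy, hx.2⟩⟩
  have hfiber_image := image_projI_compl_fiber (hDsub hy)
  have hfiber_def := ((definable_projI_preimage I (definable_singleton y)).inter
    (definable_prodSet hdef))
  rw [hfiber]
  exact h.dim_mu_eq_of_injOn (Set.image_nonempty.1 (hfiber_image ▸ hW)) hfiber_def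
    (definable_prodSetOn hdef Iᶜ) (definable_graph_projI Iᶜ hfiber_def) hfiber_image
    ((injOn_projI_compl_fiber y).mono Set.inter_subset_left)

end Fubini

/-- In an MS-measurable structure, with `S = S₁ × … × S_n`, `I ⊆ V` and
`π_I : S → S_I` the projection, the push-forward of `ν^S` under `π_I` agrees with
`ν^{S_I}` on definable sets: `ν^S(π_I⁻¹(D)) = ν^{S_I}(D)` for definable `D ⊆ S_I`. -/
theorem nu_pushforward
    (L : FirstOrder.Language) (M : Type*) [L.Structure M]
    (h : MSMeasuring L M)
    (n : ℕ) (Si : Fin n → Set M)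
    (hinf : ∀ i, (Si i).Infinite)
    (hdef : ∀ i, (Set.univ : Set M).Definable L (toDef1 M (Si i)))
    (I : Finset (Fin n)) (D : Set (↥I → M))
    (hDdef : (Set.univ : Set M).Definable L D)
    (hDsub : D ⊆ prodSetOn Si I) :
    h.nu (prodSet Si) (projI I ⁻¹' D ∩ prodSet Si) = h.nu (prodSetOn Si I) D := by
  rcases D.eq_empty_or_nonempty with rfl | hDne
  · simp [MSMeasuring.nu, h.mu_empty]
  have hne : ∀ i, (Si i).Nonempty := fun i => (hinf i).nonempty
  have hS : projI I ⁻¹' prodSetOn Si I ∩ prodSet Si = prodSet Si :=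
    Set.inter_eq_right.2 fun x hx => projI_mem_prodSetOn hx I
  have hSfubini := h.dim_mu_preimage_projI hne hdef (definable_prodSetOn hdef I)
    (prodSetOn_nonempty hne I) le_rfl
  have hXfubini := h.dim_mu_preimage_projI hne hdef hDdef hDne hDsub
  rw [hS] at hSfubini
  have hW : h.mu (prodSetOn Si Iᶜ) ≠ 0 :=
    (h.mu_pos _ (definable_prodSetOn hdef Iᶜ) (prodSetOn_nonempty hne Iᶜ)).ne'
  simp only [MSMeasuring.nu, hSfubini.1, hSfubini.2, hXfubini.1, hXfubini.2, add_right_inj,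
    mul_div_mul_left _ _ hW]

end MeasureAmalgamation
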